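/- Let $(C, d_h, d_v)$ be a first-quadrant double cochain complex such that, for some fixed $p$ and $q$, the vertical differential $d_v^{p+1,q-1} : C^{p+1,q-1} \to C^{p+1,q}$ is zero (only at column $p+1$; it is not required that $d_v^{\bullet,q-1} = 0$ in every column). Then in the spectral sequence obtained by filtering the total complex columnwise, the differentials $d_r^{p,q}$ and $d_r^{p-r+2, q+r-2}$ are zero for all $r \geq 2$. -/

import Mathlib

open DirectSum

variable (k : Type*) [Field k] (M : ℤ → ℤ → Type*)
  [∀ p q, AddCommGroup (M p q)] [∀ p q, Module k (M p q)]

/-- The degree-`n` piece `⨁_{p+q=n} M^{p,q}` of the total complex of a double complex. -/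
abbrev TotalCx (n : ℤ) : Type _ :=
  DirectSum {i : ℤ × ℤ // i.1 + i.2 = n} (fun i => M i.1.1 i.1.2)

variable (dh : ∀ p q, M p q →ₗ[k] M (p + 1) q) (dv : ∀ p q, M p q →ₗ[k] M p (q + 1))

/-- The total differential `d = d_h + d_v` of the double complex. -/
noncomputable def totalDiff (n : ℤ) : TotalCx M n →ₗ[k] TotalCx M (n + 1) :=
  DirectSum.toModule k _ _ fun i : {i : ℤ × ℤ // i.1 + i.2 = n} =>
    (DirectSum.lof k {i : ℤ × ℤ // i.1 + i.2 = n + 1} (fun j => M j.1.1 j.1.2)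
        ⟨(i.1.1 + 1, i.1.2), by have := i.2; omega⟩).comp (dh i.1.1 i.1.2)
      + (DirectSum.lof k {i : ℤ × ℤ // i.1 + i.2 = n + 1} (fun j => M j.1.1 j.1.2)
          ⟨(i.1.1, i.1.2 + 1), by have := i.2; omega⟩).comp (dv i.1.1 i.1.2)

/-- The column filtration `F^p 𝒞^n = ⨁_{k+l=n, k ≥ p} M^{k,l}` of the total complex. -/
noncomputable def colFilt (p n : ℤ) : Submodule k (TotalCx M n) :=
  ⨆ (i : {i : ℤ × ℤ // i.1 + i.2 = n}) (_ : p ≤ i.1.1),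
    LinearMap.range (DirectSum.lof k {i : ℤ × ℤ // i.1 + i.2 = n} (fun j => M j.1.1 j.1.2) i)

lemma mem_colFilt_iff (p n : ℤ) (x : TotalCx M n) :
    x ∈ colFilt k M p n ↔ ∀ i : {i : ℤ × ℤ // i.1 + i.2 = n}, i.1.1 < p → x i = 0 := by
  classical
  constructor
  · intro hx
    have : colFilt k M p n ≤
        { carrier := {x : TotalCx M n | ∀ i : {i : ℤ × ℤ // i.1 + i.2 = n}, i.1.1 < p → x i = 0}
          zero_mem' := by intro i _; simp
          add_mem' := by intro a b ha hb i hi; rw [DirectSum.add_apply, ha i hi, hb i hi, add_zero]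
          smul_mem' := by intro c a ha i hi; change (c • a) i = 0; rw [DFinsupp.smul_apply, ha i hi, smul_zero] } := by
      apply iSup_le; intro i; apply iSup_le; intro hi
      rintro _ ⟨m, rfl⟩ i' hi'
      rw [DirectSum.lof_eq_of, DirectSum.of_eq_of_ne]
      intro h
      rw [← h] at hi
      omega
    exact this hx
  · intro hx
    rw [← DirectSum.sum_support_of x]
    apply Submodule.sum_mem
    intro i _
    by_cases hi : p ≤ i.1.1
    · exact le_iSup₂ (f := fun (i : {i : ℤ × ℤ // i.1 + i.2 = n}) (_ : p ≤ i.1.1) =>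
        LinearMap.range (DirectSum.lof k {i : ℤ × ℤ // i.1 + i.2 = n} (fun j => M j.1.1 j.1.2) i))
        i hi ⟨x i, by rw [DirectSum.lof_eq_of]⟩
    · rw [hx i (by omega)]
      simp

lemma colFilt_mono {c c' : ℤ} (h : c ≤ c') (n : ℤ) : colFilt k M c' n ≤ colFilt k M c n := by
  intro x hx
  rw [mem_colFilt_iff] at hx ⊢
  intro i hi
  exact hx i (by omega)

lemma comp_totalDiff (n a b : ℤ) (h : a + 1 + (b + 1) = n + 1) (x : TotalCx M n) :
    totalDiff k M dh dv n x ⟨(a + 1, b + 1), h⟩ =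
      dh a (b + 1) (x ⟨(a, b + 1), by omega⟩) + dv (a + 1) b (x ⟨(a + 1, b), by omega⟩) := by
  classical
  induction x using DirectSum.induction_on with
  | zero => simp
  | of i m =>
    obtain ⟨⟨c, d⟩, hcd⟩ := i
    rw [← DirectSum.lof_eq_of k]
    rw [totalDiff, DirectSum.toModule_lof]
    simp only [LinearMap.add_apply, LinearMap.comp_apply, DirectSum.lof_eq_of,
      DirectSum.add_apply]
    rcases eq_or_ne c a with rfl | hca
    · obtain rfl : d = b + 1 := by simp at hcd; omega
      rw [DirectSum.of_eq_same, DirectSum.of_eq_same,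
        DirectSum.of_eq_of_ne _ _ _ (by intro hh; have := congrArg (fun z => z.1.2) hh; simp at this; all_goals omega),
        DirectSum.of_eq_of_ne _ _ _ (by intro hh; have := congrArg (fun z => z.1.2) hh; simp at this; all_goals omega)]
      simp
    · rcases eq_or_ne c (a + 1) with rfl | hca'
      · obtain rfl : d = b := by simp at hcd; omega
        rw [DirectSum.of_eq_same, DirectSum.of_eq_same,
          DirectSum.of_eq_of_ne _ _ _ (by intro hh; have := congrArg (fun z => z.1.1) hh; simp at this; all_goals omega),
          DirectSum.of_eq_of_ne _ _ _ (by intro hh; have := congrArg (fun z => z.1.1) hh; simp at this; all_goals omega)]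
        simp
      · rw [DirectSum.of_eq_of_ne _ _ _ (by intro hh; have := congrArg (fun z => z.1.1) hh; simp at this; all_goals omega),
          DirectSum.of_eq_of_ne _ _ _ (by intro hh; have := congrArg (fun z => z.1.1) hh; simp at this; all_goals omega),
          DirectSum.of_eq_of_ne _ _ _ (by intro hh; have := congrArg (fun z => z.1.1) hh; simp at this; all_goals omega),
          DirectSum.of_eq_of_ne _ _ _ (by intro hh; have := congrArg (fun z => z.1.1) hh; simp at this; all_goals omega)]
        simp
  | add x y hx hy =>
    rw [map_add, DirectSum.add_apply, hx, hy, DirectSum.add_apply, DirectSum.add_apply,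
      map_add, map_add]
    abel

lemma exists_rep (p q : ℤ) (hzero : dv (p + 1) (q - 1) = 0) (x : TotalCx M (p + q))
    (hdx : totalDiff k M dh dv (p + q) x ∈ colFilt k M (p + 2) (p + q + 1)) :
    ∃ y ∈ colFilt k M (p + 1) (p + q),
      totalDiff k M dh dv (p + q) y = totalDiff k M dh dv (p + q) x := by
  classical
  set t : TotalCx M (p + q) := DFinsupp.filter (fun i => i.1.1 < p + 1) x with ht
  refine ⟨x - t, ?_, ?_⟩
  · rw [mem_colFilt_iff]
    intro i hi
    rw [DFinsupp.sub_apply, ht, DFinsupp.filter_apply, if_pos hi, sub_self]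
  · rw [map_sub]
    suffices h : totalDiff k M dh dv (p + q) t = 0 by rw [h, sub_zero]
    have hdx' := (mem_colFilt_iff k M _ _ _).mp hdx
    refine DFinsupp.ext fun j => ?_
    obtain ⟨⟨j1, j2⟩, hj⟩ := j
    obtain ⟨a, rfl⟩ : ∃ a, j1 = a + 1 := ⟨j1 - 1, by omega⟩
    obtain ⟨b, rfl⟩ : ∃ b, j2 = b + 1 := ⟨j2 - 1, by omega⟩
    rw [comp_totalDiff, DFinsupp.zero_apply]
    rcases lt_trichotomy (a + 1) (p + 1) with hlt | heq | hgt
    · rw [ht, DFinsupp.filter_apply, DFinsupp.filter_apply, if_pos (by simpa using by omega : ((⟨(a, b+1), by omega⟩ : {i : ℤ × ℤ // i.1 + i.2 = p + q}) : ℤ × ℤ).1 < p + 1), if_pos (by simpa using hlt)]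
      rw [← comp_totalDiff]
      exact hdx' _ (by simpa using by omega)
    · obtain rfl : a = p := by omega
      obtain rfl : b = q - 1 := by omega
      rw [ht, DFinsupp.filter_apply, DFinsupp.filter_apply,
        if_pos (by simpa using by omega), if_neg (by simp)]
      rw [map_zero, add_zero]
      have h0 := hdx' ⟨(a + 1, q - 1 + 1), by omega⟩ (by simpa using by omega)
      rw [comp_totalDiff, hzero] at h0
      simpa using h0
    · rw [ht, DFinsupp.filter_apply, DFinsupp.filter_apply,
        if_neg (by simpa using by omega), if_neg (by simpa using by omega)]
      rw [map_zero, map_zero, add_zero]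

/-- Let `(C, d_h, d_v)` be a first-quadrant double complex whose vertical
differential `d_v^{p+1,q-1} : C^{p+1,q-1} → C^{p+1,q}` vanishes, for some fixed `p`, `q`.
Consider the spectral sequence of the column filtration of the total complex, in which
`E_r^{a,b} = Z_r^{a,b} / (Z_{r-1}^{a+1,b-1} + B_{r-1}^{a,b})` with
`Z_r^{a,b} = F^a𝒞^{a+b} ∩ d⁻¹(F^{a+r}𝒞^{a+b+1})` and
`B_r^{a,b} = F^a𝒞^{a+b} ∩ d(F^{a-r}𝒞^{a+b-1})`, and in which `d_r` is induced by `d`.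
Then for all `r ≥ 2` the differentials `d_r^{p,q}` and `d_r^{p-r+2,q+r-2}` vanish; i.e. for
every element `x` of the relevant `Z_r`, the image `d x` lies in the corresponding subgroup
`Z_{r-1} + B_{r-1}` of the target. -/
theorem spectral_sequence_differentials_vanish
    (hdh : ∀ p q, (dh (p + 1) q).comp (dh p q) = 0)
    (hdv : ∀ p q, (dv p (q + 1)).comp (dv p q) = 0)
    (hanti : ∀ p q, (dv (p + 1) q).comp (dh p q) + (dh p (q + 1)).comp (dv p q) = 0)
    (hfq : ∀ p q : ℤ, p < 0 ∨ q < 0 → Subsingleton (M p q))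
    (p q : ℤ) (hzero : dv (p + 1) (q - 1) = 0) :
    ∀ r : ℤ, 2 ≤ r →
      -- `d_r^{p,q} = 0` :
      (∀ x : TotalCx M (p + q), x ∈ colFilt k M p (p + q) →
        totalDiff k M dh dv (p + q) x ∈ colFilt k M (p + r) (p + q + 1) →
        totalDiff k M dh dv (p + q) x ∈
          (colFilt k M (p + r + 1) (p + q + 1) ⊓
            (colFilt k M (p + 2 * r) (p + q + 1 + 1)).comap (totalDiff k M dh dv (p + q + 1))) ⊔
          (colFilt k M (p + r) (p + q + 1) ⊓
            (colFilt k M (p + 1) (p + q)).map (totalDiff k M dh dv (p + q)))) ∧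
      -- `d_r^{p-r+2, q+r-2} = 0` :
      (∀ x : TotalCx M (p + q), x ∈ colFilt k M (p - r + 2) (p + q) →
        totalDiff k M dh dv (p + q) x ∈ colFilt k M (p + 2) (p + q + 1) →
        totalDiff k M dh dv (p + q) x ∈
          (colFilt k M (p + 3) (p + q + 1) ⊓
            (colFilt k M (p + r + 2) (p + q + 1 + 1)).comap (totalDiff k M dh dv (p + q + 1))) ⊔
          (colFilt k M (p + 2) (p + q + 1) ⊓
            (colFilt k M (p - r + 3) (p + q)).map (totalDiff k M dh dv (p + q)))) := by
  intro r hr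
  constructor
  · intro x hx hdx
    obtain ⟨y, hy, hyx⟩ := exists_rep k M dh dv p q hzero x
      (colFilt_mono k M (by omega : p + 2 ≤ p + r) _ hdx)
    exact Submodule.mem_sup_right
      (Submodule.mem_inf.mpr ⟨hdx, Submodule.mem_map.mpr ⟨y, hy, hyx⟩⟩)
  · intro x hx hdx
    obtain ⟨y, hy, hyx⟩ := exists_rep k M dh dv p q hzero x hdx
    exact Submodule.mem_sup_right
      (Submodule.mem_inf.mpr ⟨hdx, Submodule.mem_map.mpr
        ⟨y, colFilt_mono k M (by omega : p - r + 3 ≤ p + 1) _ hy, hyx⟩⟩)
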